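/- Let H be a complex Hilbert space, d a nonempty countable index set, and K = ℓ²(F_d⁺;H). For every T ∈ B(K) and every m ∈ ℤ there exists a unique operator G_m(T) ∈ B(K) with ‖G_m(T)‖ ≤ ‖T‖ whose matrix entries satisfy (G_m(T))_{μ,ν} = T_{μ,ν} whenever |μ| − |ν| = m, and (G_m(T))_{μ,ν} = 0 otherwise. (G_m(T) is the m-th Fourier coefficient of T, obtained in the paper as the weak integral (1/2π)∫_{-π}^{π} U_s T U_s* e^{-ims} ds for the gauge unitaries U_s(ξ⊗e_w) = e^{i|w|s} ξ⊗e_w.) -/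

import Mathlib

open scoped ENNReal
open ContinuousLinearMap

noncomputable section

/-- `ℓ²(Λ; H)`: square-summable `H`-valued families indexed by `Λ`. -/
abbrev L2 (Λ : Type*) (H : Type*) [NormedAddCommGroup H] [InnerProductSpace ℂ H] :
    Type _ :=
  lp (fun _ : Λ => H) 2

variable {Λ H : Type*} [NormedAddCommGroup H] [InnerProductSpace ℂ H]

open Classical in
/-- `ξ ⊗ e_w`: the element of `ℓ²(Λ;H)` supported at `w` with value `ξ`. -/
def el (w : Λ) (ξ : H) : L2 Λ H := lp.single 2 w ξ

open Classical in
/-- `ξ ↦ ξ ⊗ e_w` as a continuous linear map. -/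
def elCLM (w : Λ) : H →L[ℂ] L2 Λ H :=
  LinearMap.mkContinuous
    { toFun := fun ξ => el w ξ
      map_add' := by
        intro ξ η
        apply lp.ext
        funext j
        by_cases h : j = w
        · subst h; simp [el, lp.single_apply_self]
        · simp [el, lp.single_apply_ne _ _ _ h]
      map_smul' := by
        intro c ξ
        simp [el, lp.single_smul] }
    1
    (by
      intro ξ
      simp only [LinearMap.coe_mk, AddHom.coe_mk, one_mul]
      exact le_of_eq (lp.norm_single (E := fun _ : Λ => H) (by norm_num) w ξ))

/-- Evaluation at coordinate `w` as a continuous linear map. -/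
def coordCLM (w : Λ) : L2 Λ H →L[ℂ] H :=
  LinearMap.mkContinuous
    { toFun := fun f => f w
      map_add' := by intro f g; simp
      map_smul' := by intro c f; simp }
    1
    (by
      intro f
      simp only [one_mul]
      exact lp.norm_apply_le_norm (by norm_num : (2 : ℝ≥0∞) ≠ 0) f w)

/-- The `(μ,ν)` matrix entry of an operator on `ℓ²(Λ;H)`. -/
def entry (T : L2 Λ H →L[ℂ] L2 Λ H) (μ ν : Λ) : H →L[ℂ] H :=
  (coordCLM μ).comp (T.comp (elCLM ν))

/-- Membership in the closure of `S` for the weak operator topology. -/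
def InWOTClosure {E : Type*} [NormedAddCommGroup E] [InnerProductSpace ℂ E]
    (S : Set (E →L[ℂ] E)) (T : E →L[ℂ] E) : Prop :=
  ∀ ε > (0 : ℝ), ∀ (n : ℕ) (ξ η : Fin n → E),
    ∃ A ∈ S, ∀ i, ‖(inner ℂ ((T - A) (ξ i)) (η i) : ℂ)‖ < ε

/-- The closure of `S` in the weak operator topology. -/
def wotClosure {E : Type*} [NormedAddCommGroup E] [InnerProductSpace ℂ E]
    (S : Set (E →L[ℂ] E)) : Set (E →L[ℂ] E) :=
  { T | InWOTClosure S T }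

/-- A set of operators is WOT-closed. -/
def IsWOTClosed {E : Type*} [NormedAddCommGroup E] [InnerProductSpace ℂ E]
    (S : Set (E →L[ℂ] E)) : Prop :=
  wotClosure S ⊆ S

/-- A set `S` of operators is reflexive if any operator `T` such that `T h` lies in the
norm-closure of `S h` for every vector `h` belongs to `S`. -/
def IsReflexiveSet {E : Type*} [NormedAddCommGroup E] [InnerProductSpace ℂ E]
    (S : Set (E →L[ℂ] E)) : Prop :=
  ∀ T : E →L[ℂ] E, (∀ h : E, T h ∈ closure ((fun A : E →L[ℂ] E => A h) '' S)) → T ∈ S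

/-- The WOT-closed linear span of a set of operators. -/
def wotSpan {E : Type*} [NormedAddCommGroup E] [InnerProductSpace ℂ E]
    (S : Set (E →L[ℂ] E)) : Set (E →L[ℂ] E) :=
  wotClosure ((Submodule.span ℂ S : Submodule ℂ (E →L[ℂ] E)) : Set (E →L[ℂ] E))

/-- The reversed word. -/
def rev {ι : Type*} (μ : FreeMonoid ι) : FreeMonoid ι :=
  FreeMonoid.ofList (FreeMonoid.toList μ).reverse

/-- Length of a word. -/
def len {ι : Type*} (μ : FreeMonoid ι) : ℕ := (FreeMonoid.toList μ).length

/-- For `α : ι → (X → X)` and a word `μ = μ_m ⋯ μ_1`, the composition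
`α_μ = α_{μ_m} ∘ ⋯ ∘ α_{μ_1}`. -/
def wordMap {ι X : Type*} (α : ι → X → X) (μ : FreeMonoid ι) : X → X :=
  ((FreeMonoid.toList μ).map α).foldr (· ∘ ·) id

/-- For commuting maps `α_1,…,α_d` and `n ∈ ℕ^d`, the composition
`α^n = α_1^{n_1} ∘ ⋯ ∘ α_d^{n_d}`. -/
def multiIter {X : Type*} {d : ℕ} (α : Fin d → X → X) (n : Fin d → ℕ) : X → X :=
  (List.ofFn fun i => (α i)^[n i]).foldr (· ∘ ·) id

/-- The commutant of a set of operators. -/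
def commutantS {E : Type*} [NormedAddCommGroup E] [InnerProductSpace ℂ E]
    (S : Set (E →L[ℂ] E)) : Set (E →L[ℂ] E) :=
  { T | ∀ s ∈ S, T * s = s * T }


/-!
Write `P_k` for the coordinate projection of `ℓ²(F_d⁺;H)` onto the words of length `k`.
The operator `G = ∑ₖ P_{k+m} T P_k` has exactly the required matrix entries, and since both
families `(P_{k+m})ₖ` and `(P_k)ₖ` have mutually orthogonal ranges,
`‖G f‖² = ∑ₖ ‖P_{k+m} T P_k f‖² ≤ ‖T‖² ∑ₖ ‖P_k f‖² = ‖T‖² ‖f‖²`.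
Uniqueness holds because an operator on `ℓ²` is determined by its matrix entries.
-/

namespace L2

theorem memℓp_of_sum_norm_sq_le {ι E : Type*} [NormedAddCommGroup E] {g : ι → E} {C : ℝ}
    (h : ∀ s : Finset ι, ∑ i ∈ s, ‖g i‖ ^ 2 ≤ C) : Memℓp g 2 :=
  memℓp_gen' (C := C) (by simpa [Real.rpow_two] using h)

theorem sum_norm_sq_le (f : L2 Λ H) (s : Finset Λ) : ∑ i ∈ s, ‖f i‖ ^ 2 ≤ ‖f‖ ^ 2 := by
  simpa [Real.rpow_two] using lp.sum_rpow_le_norm_rpow (p := 2) (by norm_num) f s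

theorem summable_norm_sq (f : L2 Λ H) : Summable fun i => ‖f i‖ ^ 2 := by
  simpa [Real.rpow_two] using (lp.memℓp f).summable (p := 2) (by norm_num)

theorem norm_sq_eq_tsum (f : L2 Λ H) : ‖f‖ ^ 2 = ∑' i, ‖f i‖ ^ 2 := by
  simpa [Real.rpow_two] using lp.norm_rpow_eq_tsum (p := 2) (by norm_num) f

theorem norm_le_of_sum_norm_sq_le {g : L2 Λ H} {C : ℝ} (hC : 0 ≤ C)
    (h : ∀ s : Finset Λ, ∑ i ∈ s, ‖g i‖ ^ 2 ≤ C ^ 2) : ‖g‖ ≤ C :=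
  lp.norm_le_of_forall_sum_le (p := 2) (by norm_num) hC (by simpa [Real.rpow_two] using h)

open Classical in
def restrict (S : Set Λ) : L2 Λ H →L[ℂ] L2 Λ H :=
  LinearMap.mkContinuous
    { toFun := fun f => ⟨S.indicator f, (lp.memℓp f).mono' (norm_indicator_le_norm_self f)⟩
      map_add' := fun f g => lp.ext (Set.indicator_add S f g)
      map_smul' := fun c f => lp.ext (Set.indicator_const_smul S c f) }
    1 (fun f => by
      rw [one_mul]
      exact lp.norm_mono two_ne_zero (norm_indicator_le_norm_self f))

theorem restrict_apply (S : Set Λ) (f : L2 Λ H) (i : Λ) : restrict S f i = S.indicator f i := rfl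

theorem restrict_el (S : Set Λ) (ν : Λ) (ξ : H) [Decidable (ν ∈ S)] :
    restrict S (el ν ξ) = if ν ∈ S then el ν ξ else 0 := by
  classical
  ext i
  rw [restrict_apply, Set.indicator_apply]
  by_cases hi : i = ν
  · subst hi; split_ifs <;> rfl
  · split_ifs <;> simp [el, hi]

theorem sum_norm_sq_restrict_fiber_le {κ : Type*} (ψ : Λ → κ) (f : L2 Λ H) (t : Finset κ) :
    ∑ k ∈ t, ‖restrict (ψ ⁻¹' {k}) f‖ ^ 2 ≤ ‖f‖ ^ 2 := by
  classical
  have pointwise (i : Λ) : ∑ k ∈ t, ‖restrict (ψ ⁻¹' {k}) f i‖ ^ 2 ≤ ‖f i‖ ^ 2 := by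
    simp only [restrict_apply, Set.indicator_apply, Set.mem_preimage, Set.mem_singleton_iff,
      apply_ite (‖·‖ ^ 2), norm_zero, zero_pow two_ne_zero, Finset.sum_ite_eq]
    split_ifs
    exacts [le_rfl, by positivity]
  calc ∑ k ∈ t, ‖restrict (ψ ⁻¹' {k}) f‖ ^ 2
      = ∑' i, ∑ k ∈ t, ‖restrict (ψ ⁻¹' {k}) f i‖ ^ 2 := by
        simp_rw [norm_sq_eq_tsum]
        exact (Summable.tsum_finsetSum fun k _ => summable_norm_sq _).symm
    _ ≤ ∑' i, ‖f i‖ ^ 2 :=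
        Summable.tsum_le_tsum pointwise (summable_sum fun k _ => summable_norm_sq _)
          (summable_norm_sq f)
    _ = ‖f‖ ^ 2 := (norm_sq_eq_tsum f).symm

end L2

theorem ext_entry {A B : L2 Λ H →L[ℂ] L2 Λ H} (h : ∀ μ ν, entry A μ ν = entry B μ ν) : A = B := by
  classical
  ext f μ
  have hf : HasSum (fun ν => lp.single 2 ν (f ν)) f := lp.hasSum_single (by norm_num) f
  have hA : HasSum (fun ν => entry A μ ν (f ν)) (A f μ) := (hf.mapL A).mapL (coordCLM μ)
  have hB : HasSum (fun ν => entry B μ ν (f ν)) (B f μ) := (hf.mapL B).mapL (coordCLM μ)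
  simp only [h] at hA
  exact hA.unique hB

open L2

section BlockPart

variable {κ : Type*}

theorem sum_norm_sq_apply_restrict_fiber_le (T : L2 Λ H →L[ℂ] L2 Λ H) (φ ψ : Λ → κ)
    (f : L2 Λ H) (s : Finset Λ) :
    ∑ μ ∈ s, ‖T (restrict (ψ ⁻¹' {φ μ}) f) μ‖ ^ 2 ≤ (‖T‖ * ‖f‖) ^ 2 := by
  classical
  calc ∑ μ ∈ s, ‖T (restrict (ψ ⁻¹' {φ μ}) f) μ‖ ^ 2
      = ∑ k ∈ s.image φ, ∑ μ ∈ s with φ μ = k, ‖T (restrict (ψ ⁻¹' {k}) f) μ‖ ^ 2 := by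
        rw [← Finset.sum_fiberwise_of_maps_to fun μ hμ => Finset.mem_image_of_mem φ hμ]
        refine Finset.sum_congr rfl fun k _ => Finset.sum_congr rfl fun μ hμ => ?_
        rw [(Finset.mem_filter.1 hμ).2]
    _ ≤ ∑ k ∈ s.image φ, ‖T (restrict (ψ ⁻¹' {k}) f)‖ ^ 2 :=
        Finset.sum_le_sum fun k _ => sum_norm_sq_le _ _
    _ ≤ ∑ k ∈ s.image φ, (‖T‖ * ‖restrict (ψ ⁻¹' {k}) f‖) ^ 2 := by
        gcongr with k
        exact T.le_opNorm _
    _ = ‖T‖ ^ 2 * ∑ k ∈ s.image φ, ‖restrict (ψ ⁻¹' {k}) f‖ ^ 2 := by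
        simp_rw [mul_pow, Finset.mul_sum]
    _ ≤ ‖T‖ ^ 2 * ‖f‖ ^ 2 := by
        gcongr
        exact sum_norm_sq_restrict_fiber_le ψ f _
    _ = (‖T‖ * ‖f‖) ^ 2 := (mul_pow _ _ _).symm

/-- The part of `T` made of the entries `(μ, ν)` with `ψ ν = φ μ`; with `φ μ = |μ| - m` and
`ψ ν = |ν|` this is the Fourier coefficient `G_m(T)`. -/
def blockPart (T : L2 Λ H →L[ℂ] L2 Λ H) (φ ψ : Λ → κ) : L2 Λ H →L[ℂ] L2 Λ H :=
  LinearMap.mkContinuous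
    { toFun := fun f => ⟨fun μ => T (restrict (ψ ⁻¹' {φ μ}) f) μ,
        memℓp_of_sum_norm_sq_le (sum_norm_sq_apply_restrict_fiber_le T φ ψ f)⟩
      map_add' := fun f g => lp.ext <| funext fun μ => by simp; rfl
      map_smul' := fun c f => lp.ext <| funext fun μ => by simp }
    ‖T‖ fun f => norm_le_of_sum_norm_sq_le (by positivity)
      (sum_norm_sq_apply_restrict_fiber_le T φ ψ f)

theorem norm_blockPart_le (T : L2 Λ H →L[ℂ] L2 Λ H) (φ ψ : Λ → κ) : ‖blockPart T φ ψ‖ ≤ ‖T‖ :=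
  LinearMap.mkContinuous_norm_le _ (norm_nonneg T) _

theorem entry_blockPart [DecidableEq κ] (T : L2 Λ H →L[ℂ] L2 Λ H) (φ ψ : Λ → κ) (μ ν : Λ) :
    entry (blockPart T φ ψ) μ ν = if ψ ν = φ μ then entry T μ ν else 0 := by
  classical
  ext ξ
  change T (restrict (ψ ⁻¹' {φ μ}) (el ν ξ)) μ = _
  rw [restrict_el]
  by_cases h : ψ ν = φ μ
  · simp only [Set.mem_preimage, Set.mem_singleton_iff, h, if_true]
    rfl
  · simp [h]

end BlockPart

theorem statement2_general
    {H : Type*} [NormedAddCommGroup H] [InnerProductSpace ℂ H]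
    {ι : Type*}
    (T : L2 (FreeMonoid ι) H →L[ℂ] L2 (FreeMonoid ι) H) (m : ℤ) :
    ∃! G : L2 (FreeMonoid ι) H →L[ℂ] L2 (FreeMonoid ι) H,
      ‖G‖ ≤ ‖T‖ ∧
        ∀ μ ν : FreeMonoid ι,
          entry G μ ν = if (len μ : ℤ) - (len ν : ℤ) = m then entry T μ ν else 0 := by
  set G := blockPart T (fun μ : FreeMonoid ι => (len μ : ℤ) - m) fun ν => (len ν : ℤ)
  have entry_G (μ ν : FreeMonoid ι) :
      entry G μ ν = if (len μ : ℤ) - (len ν : ℤ) = m then entry T μ ν else 0 := by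
    rw [entry_blockPart]
    exact if_congr (by omega) rfl rfl
  refine ⟨G, ⟨norm_blockPart_le _ _ _, entry_G⟩, fun G' ⟨_, entry_G'⟩ => ?_⟩
  exact ext_entry fun μ ν => by rw [entry_G, entry_G']

/-- existence and uniqueness of the `m`-th Fourier coefficient `G_m(T)`. -/
theorem statement2
    {H : Type*} [NormedAddCommGroup H] [InnerProductSpace ℂ H] [CompleteSpace H]
    {ι : Type*} [Countable ι] [Nonempty ι]
    (T : L2 (FreeMonoid ι) H →L[ℂ] L2 (FreeMonoid ι) H) (m : ℤ) :
    ∃! G : L2 (FreeMonoid ι) H →L[ℂ] L2 (FreeMonoid ι) H,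
      ‖G‖ ≤ ‖T‖ ∧
        ∀ μ ν : FreeMonoid ι,
          entry G μ ν = if (len μ : ℤ) - (len ν : ℤ) = m then entry T μ ν else 0 :=
  statement2_general T m
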